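/- For the modified rotor-router aggregation process R̃_n on ℕ with sink 0 and initial rotors pointing outwards, for every n ≥ 1: the cluster is R̃_n = {1, …, h̃(n)}; the rotor configuration after the n-th particle is ρ̃_n(y) = y−1 for 1 ≤ y ≤ r̃(n) and ρ̃_n(y) = y+1 for y > r̃(n); and the odometer is ũ_n(y) = f(h̃(n)−y) + e(r̃(n)−y) for 1 ≤ y ≤ r̃(n), ũ_n(y) = f(h̃(n)−y) for r̃(n) < y ≤ h̃(n), and ũ_n(y) = 0 for y > h̃(n), where h̃(n) = max{k ∈ ℕ : k(k+1)/2 ≤ n}, r̃(n) = n − h̃(n)(h̃(n)+1)/2, f(y) = y(y+1) and e(y) = 2y+1. -/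
import Mathlib


/-!
The modified rotor-router aggregation process `R̃_n` on `ℕ` with sink `0` and
all initial rotors pointing outwards: for every `n ≥ 1` the cluster is
`R̃_n = {1, …, h̃(n)}`, the rotors satisfy `ρ̃_n(y) = y - 1` for `1 ≤ y ≤ r̃(n)`
and `ρ̃_n(y) = y + 1` for `y > r̃(n)`, and the odometer is given by
`ũ_n(y) = f(h̃(n) - y) + e(r̃(n) - y)` for `1 ≤ y ≤ r̃(n)`,
`ũ_n(y) = f(h̃(n) - y)` for `r̃(n) < y ≤ h̃(n)` and `ũ_n(y) = 0` for `y > h̃(n)`,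
where `h̃(n) = max{k : k(k+1)/2 ≤ n}`, `r̃(n) = n - h̃(n)(h̃(n)+1)/2`,
`f(y) = y(y+1)` and `e(y) = 2y + 1`.
-/

namespace Stmt8

/-- Advance the rotor at vertex `y ≥ 1` pointing at `t ∈ {y-1, y+1}`:
it switches to the other neighbour. -/
def adv (y t : ℕ) : ℕ := if t = y + 1 then y - 1 else y + 1

/-- The initial rotor configuration `ρ̃₀(y) = y + 1`. -/
def rho0 : ℕ → ℕ := fun y => y + 1

/-- One step of a rotor-router walk tracking (position, rotor configuration,
odometer): advance the rotor at the current position, move the particle there,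
and record one more particle sent out of the current position. -/
def wstep (s : ℕ × (ℕ → ℕ) × (ℕ → ℕ)) : ℕ × (ℕ → ℕ) × (ℕ → ℕ) :=
  let ρ' := Function.update s.2.1 s.1 (adv s.1 (s.2.1 s.1))
  (ρ' s.1, ρ', Function.update s.2.2 s.1 (s.2.2 s.1 + 1))

/-- The state of a rotor-router walk started at `1` after `t` steps. -/
def pwalk (ρ : ℕ → ℕ) (u : ℕ → ℕ) (t : ℕ) : ℕ × (ℕ → ℕ) × (ℕ → ℕ) :=
  wstep^[t] (1, ρ, u)

open Classical

/-- Run one particle from `1` until it first reaches the sink `0` or exits the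
cluster `R`; return its final position with the rotor configuration and odometer
at that time. -/
noncomputable def settle (R : Set ℕ) (ρ : ℕ → ℕ) (u : ℕ → ℕ) :
    ℕ × (ℕ → ℕ) × (ℕ → ℕ) :=
  if hex : ∃ t, (pwalk ρ u t).1 = 0 ∨ (pwalk ρ u t).1 ∉ R then
    pwalk ρ u (Nat.find hex)
  else (0, ρ, u)

/-- The modified aggregation process: `state k` is (cluster, rotors, odometer)
after `k + 1` particles, so `(state 0).1 = R̃₁ = {1}`.  Each new particle walks
from `1` until it reaches `0` or exits the previous cluster; it joins the
cluster unless it stopped at the sink `0`. -/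
noncomputable def state : ℕ → Set ℕ × (ℕ → ℕ) × (ℕ → ℕ)
  | 0 => ({1}, rho0, fun _ => 0)
  | k + 1 =>
      let s := state k
      let e := settle s.1 s.2.1 s.2.2
      (if e.1 = 0 then s.1 else insert e.1 s.1, e.2.1, e.2.2)

/-- `h̃(n) = max{k ∈ ℕ : k(k+1)/2 ≤ n}`. -/
def ht (n : ℕ) : ℕ := Nat.findGreatest (fun k => k * (k + 1) / 2 ≤ n) n

/-- `r̃(n) = n - h̃(n)(h̃(n)+1)/2`. -/
def rt (n : ℕ) : ℕ := n - ht n * (ht n + 1) / 2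

/-- `f(y) = y(y+1)`. -/
def f (y : ℕ) : ℕ := y * (y + 1)

/-- `e(y) = 2y + 1`. -/
def eg (y : ℕ) : ℕ := 2 * y + 1

/-- The generic odometer profile `ũ(h, r, y)`. -/
def tU (h r y : ℕ) : ℕ :=
  if y = 0 then 0
  else if y ≤ r then f (h - y) + eg (r - y)
  else if y ≤ h then f (h - y)
  else 0
-- AUX START

/-- Rotor pattern: down on `1..r`, up elsewhere. -/
def P (r : ℕ) : ℕ → ℕ := fun y => if 1 ≤ y ∧ y ≤ r then y - 1 else y + 1

lemma pwalk_succ (ρ u : ℕ → ℕ) (t : ℕ) :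
    pwalk ρ u (t + 1) = wstep (pwalk ρ u t) :=
  Function.iterate_succ_apply' wstep t _

lemma wstep_eq (x : ℕ) (ρ u : ℕ → ℕ) :
    wstep (x, ρ, u) =
      (adv x (ρ x), Function.update ρ x (adv x (ρ x)),
        Function.update u x (u x + 1)) := by
  simp [wstep]

lemma pwalk_ascent (r : ℕ) (u : ℕ → ℕ) :
    ∀ t, t ≤ r →
      pwalk (P r) u t =
        (t + 1,
         fun y => if 1 ≤ y ∧ t < y ∧ y ≤ r then y - 1 else y + 1,
         fun y => u y + if 1 ≤ y ∧ y ≤ t then 1 else 0) := by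
  intro t
  induction t with
  | zero =>
      intro _
      refine Prod.ext rfl (Prod.ext ?_ ?_) <;> funext y <;>
        simp [pwalk, P] <;> (try split_ifs) <;> omega
  | succ t ih =>
      intro hle
      rw [pwalk_succ, ih (by omega), wstep_eq]
      have hv : (if 1 ≤ t + 1 ∧ t < t + 1 ∧ t + 1 ≤ r then t + 1 - 1 else t + 1 + 1) = t := by
        rw [if_pos ⟨by omega, by omega, hle⟩]; omega
      have ha : adv (t + 1) t = t + 2 := by
        unfold adv; rw [if_neg (by omega)]
      rw [hv, ha]
      refine Prod.ext rfl (Prod.ext ?_ ?_) <;> funext y <;>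
        simp only [Function.update_apply] <;> split_ifs <;> (try subst_vars) <;> omega

lemma pwalk_descent (r : ℕ) (u : ℕ → ℕ) :
    ∀ k, k ≤ r →
      pwalk (P r) u (r + 1 + k) =
        (r - k,
         fun y => if 1 ≤ y ∧ r - k < y ∧ y ≤ r + 1 then y - 1 else y + 1,
         fun y => u y + (if 1 ≤ y ∧ y ≤ r + 1 then 1 else 0) +
           (if r - k < y ∧ y ≤ r then 1 else 0)) := by
  intro k
  induction k with
  | zero =>
      intro _
      rw [show r + 1 + 0 = r + 1 from rfl, pwalk_succ, pwalk_ascent r u r le_rfl, wstep_eq]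
      have hv : (if 1 ≤ r + 1 ∧ r < r + 1 ∧ r + 1 ≤ r then r + 1 - 1 else r + 1 + 1)
          = r + 2 := by
        rw [if_neg (by omega)]
      have ha : adv (r + 1) (r + 2) = r := by
        unfold adv; rw [if_pos rfl]; omega
      rw [hv, ha]
      refine Prod.ext (by omega) (Prod.ext ?_ ?_) <;> funext y <;>
        simp only [Function.update_apply] <;> split_ifs <;> (try subst_vars) <;> omega
  | succ k ih =>
      intro hle
      rw [show r + 1 + (k + 1) = (r + 1 + k) + 1 from rfl, pwalk_succ, ih (by omega), wstep_eq]
      have hv : (if 1 ≤ r - k ∧ r - k < r - k ∧ r - k ≤ r + 1 then r - k - 1 else r - k + 1)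
          = r - k + 1 := by
        rw [if_neg (by omega)]
      have ha : adv (r - k) (r - k + 1) = r - k - 1 := by
        unfold adv; rw [if_pos rfl]
      rw [hv, ha]
      refine Prod.ext (by omega) (Prod.ext ?_ ?_) <;> funext y <;>
        simp only [Function.update_apply] <;> split_ifs <;> (try subst_vars) <;> omega

lemma settle_eq_of (R : Set ℕ) (ρ u : ℕ → ℕ) (T : ℕ)
    (hT : (pwalk ρ u T).1 = 0 ∨ (pwalk ρ u T).1 ∉ R)
    (hmin : ∀ t, t < T → ¬((pwalk ρ u t).1 = 0 ∨ (pwalk ρ u t).1 ∉ R)) :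
    settle R ρ u = pwalk ρ u T := by
  have hex : ∃ t, (pwalk ρ u t).1 = 0 ∨ (pwalk ρ u t).1 ∉ R := ⟨T, hT⟩
  rw [settle, dif_pos hex]
  congr 1
  exact (Nat.find_eq_iff hex).mpr ⟨hT, fun t h => hmin t h⟩

/-- Walking from a configuration with rotors down exactly on `1..r`, `r < h`:
the particle goes up to `r+1` and back down to the sink. -/
lemma settle_lt (h r : ℕ) (hr : r < h) (u : ℕ → ℕ) :
    settle (Set.Icc 1 h) (P r) u =
      (0, P (r + 1),
       fun y => u y + (if 1 ≤ y ∧ y ≤ r + 1 then 1 else 0) +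
         (if 0 < y ∧ y ≤ r then 1 else 0)) := by
  have hfin := pwalk_descent r u r le_rfl
  rw [settle_eq_of (Set.Icc 1 h) (P r) u (r + 1 + r)]
  · rw [hfin]
    refine Prod.ext (by omega) (Prod.ext ?_ ?_) <;> funext y <;>
      simp only [P] <;> split_ifs <;> omega
  · rw [hfin]; left; omega
  · intro t htlt
    rcases le_or_gt t r with hc | hc
    · rw [pwalk_ascent r u t hc]
      simp only [Set.mem_Icc]
      push_neg
      omega
    · have hk : t = r + 1 + (t - r - 1) := by omega
      rw [hk, pwalk_descent r u (t - r - 1) (by omega)]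
      simp only [Set.mem_Icc]
      push_neg
      omega

/-- Walking from a configuration with all rotors in `1..h` down: the particle
goes straight up and exits the cluster at `h+1`. -/
lemma settle_full (h : ℕ) (hh : 1 ≤ h) (u : ℕ → ℕ) :
    settle (Set.Icc 1 h) (P h) u =
      (h + 1, P 0, fun y => u y + if 1 ≤ y ∧ y ≤ h then 1 else 0) := by
  rw [settle_eq_of (Set.Icc 1 h) (P h) u h]
  · rw [pwalk_ascent h u h le_rfl]
    refine Prod.ext rfl (Prod.ext ?_ ?_) <;> funext y <;>
      simp only [P] <;> split_ifs <;> omega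
  · rw [pwalk_ascent h u h le_rfl]
    right
    simp only [Set.mem_Icc]
    omega
  · intro t htlt
    rw [pwalk_ascent h u t (by omega)]
    simp only [Set.mem_Icc]
    push_neg
    omega

lemma tri_succ (h : ℕ) : (h + 1) * (h + 2) / 2 = h * (h + 1) / 2 + (h + 1) := by
  obtain ⟨m, hm⟩ := Nat.even_mul_succ_self h
  have h2 : (h + 1) * (h + 2) = h * (h + 1) + 2 * (h + 1) := by ring
  omega

lemma tri_le_self (h : ℕ) : h ≤ h * (h + 1) / 2 := by
  rcases Nat.eq_zero_or_pos h with h0 | h0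
  · simp [h0]
  obtain ⟨m, hm⟩ := Nat.even_mul_succ_self h
  have h2 : h * 2 ≤ h * (h + 1) := Nat.mul_le_mul (le_refl h) (by omega : 2 ≤ h + 1)
  rw [hm] at h2 ⊢
  omega

lemma ht_eq {n h : ℕ} (h1 : h * (h + 1) / 2 ≤ n) (h2 : n < (h + 1) * (h + 2) / 2) :
    ht n = h := by
  have hle : h ≤ ht n :=
    Nat.le_findGreatest (le_trans (tri_le_self h) h1) h1
  have hge : ht n ≤ h := by
    by_contra hlt
    push_neg at hlt
    have hspec : ht n * (ht n + 1) / 2 ≤ n :=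
      Nat.findGreatest_spec (P := fun k => k * (k + 1) / 2 ≤ n) (Nat.zero_le n)
        (by simp)
    have hmono : (h + 1) * (h + 2) / 2 ≤ ht n * (ht n + 1) / 2 :=
      Nat.div_le_div_right (Nat.mul_le_mul (by omega) (by omega))
    omega
  omega

lemma ht_spec (n : ℕ) : ht n * (ht n + 1) / 2 ≤ n :=
  Nat.findGreatest_spec (P := fun k => k * (k + 1) / 2 ≤ n) (Nat.zero_le n) (by simp)

lemma ht_lt (n : ℕ) : n < (ht n + 1) * (ht n + 2) / 2 := by
  by_contra hc
  push_neg at hc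
  have := Nat.le_findGreatest (P := fun k => k * (k + 1) / 2 ≤ n)
    (le_trans (tri_le_self (ht n + 1)) hc) hc
  have : ht n + 1 ≤ ht n := this
  omega

lemma ht_pos {n : ℕ} (hn : 1 ≤ n) : 1 ≤ ht n :=
  Nat.le_findGreatest (P := fun k => k * (k + 1) / 2 ≤ n) hn (by simpa using hn)

lemma rt_le (n : ℕ) : rt n ≤ ht n := by
  have h1 := ht_spec n
  have h2 := ht_lt n
  have h3 := tri_succ (ht n)
  unfold rt
  omega

lemma n_eq (n : ℕ) : n = ht n * (ht n + 1) / 2 + rt n := by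
  have := ht_spec n
  unfold rt
  omega

lemma tU_succ_r {h r : ℕ} (hr : r < h) (y : ℕ) :
    tU h r y + (if 1 ≤ y ∧ y ≤ r + 1 then 1 else 0) +
      (if 0 < y ∧ y ≤ r then 1 else 0) = tU h (r + 1) y := by
  unfold tU eg
  split_ifs <;> omega

lemma tU_succ_h (h y : ℕ) :
    tU h h y + (if 1 ≤ y ∧ y ≤ h then 1 else 0) = tU (h + 1) 0 y := by
  unfold tU f eg
  rcases le_or_gt y h with hyh | hyh
  · have e1 : h + 1 - y = h - y + 1 := by omega
    have e2 : (h - y + 1) * (h - y + 1 + 1) = (h - y) * (h - y + 1) + 2 * (h - y) + 2 := by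
      ring
    rw [e1, e2]
    split_ifs <;> omega
  · have e1 : h + 1 - y = 0 := by omega
    rw [e1]
    norm_num
    split_ifs <;> omega

lemma invariant : ∀ n, 1 ≤ n →
    state (n - 1) = (Set.Icc 1 (ht n), P (rt n), tU (ht n) (rt n)) := by
  intro n
  induction n with
  | zero => omega
  | succ n ih =>
    intro _
    rcases Nat.eq_zero_or_pos n with rfl | hn
    · -- base case `n = 1`
      have h1 : ht 1 = 1 := ht_eq (by norm_num) (by norm_num)
      have h2 : rt 1 = 0 := by unfold rt; rw [h1]
      show state 0 = _
      rw [h1, h2]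
      simp only [state]
      refine Prod.ext ?_ (Prod.ext ?_ ?_)
      · simp
      · funext y
        simp only [P, rho0]
        rw [if_neg (by omega)]
      · funext y
        simp only
        unfold tU
        split_ifs with a b c
        · rfl
        · exfalso; omega
        · have e : 1 - y = 0 := by omega
          rw [e]; simp [f]
        · rfl
    · -- inductive step
      have hs : n + 1 - 1 = (n - 1) + 1 := by omega
      rw [hs, state]
      simp only [ih hn]
      have hh1 : 1 ≤ ht n := ht_pos hn
      have hrh : rt n ≤ ht n := rt_le n
      have hne := n_eq n
      have htri := tri_succ (ht n)
      rcases lt_or_eq_of_le hrh with hlt | heq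
      · -- `rt n < ht n` : the particle falls into the sink
        have hA : ht (n + 1) = ht n := by
          refine ht_eq ?_ ?_ <;> omega
        have hR : rt (n + 1) = rt n + 1 := by
          unfold rt; rw [hA]; omega
        simp only [settle_lt (ht n) (rt n) hlt (tU (ht n) (rt n))]
        rw [hA, hR]
        refine Prod.ext ?_ (Prod.ext ?_ ?_)
        · simp
        · simp
        · simp only
          funext y
          exact tU_succ_r hlt y
      · -- `rt n = ht n` : the particle exits at `ht n + 1`
        have e1 : (ht n + 1) * (ht n + 1 + 1) = (ht n + 1) * (ht n + 2) := by ring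
        have e2 : (ht n + 1 + 1) * (ht n + 1 + 2) = (ht n + 2) * (ht n + 3) := by ring
        have htri2 : (ht n + 2) * (ht n + 3) / 2
            = (ht n + 1) * (ht n + 2) / 2 + (ht n + 2) := by
          have h3 := tri_succ (ht n + 1)
          rw [show ht n + 1 + 1 = ht n + 2 from rfl,
            show ht n + 1 + 2 = ht n + 3 from rfl] at h3
          exact h3
        have hA : ht (n + 1) = ht n + 1 := by
          refine ht_eq ?_ ?_ <;> omega
        have hR : rt (n + 1) = 0 := by
          unfold rt; rw [hA]; omega
        rw [heq]
        simp only [settle_full (ht n) hh1 (tU (ht n) (ht n))]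
        rw [hA, hR]
        refine Prod.ext ?_ (Prod.ext ?_ ?_)
        · simp only
          rw [if_neg (by omega)]
          ext x
          simp only [Set.mem_insert_iff, Set.mem_Icc]
          omega
        · simp
        · funext y
          exact tU_succ_h (ht n) y

/-- **The process `R̃_n` on `ℕ`:** cluster, rotor configuration and odometer after
`n` particles. -/
theorem rotor_router_on_N (n : ℕ) (hn : 1 ≤ n) :
    (state (n - 1)).1 = Set.Icc 1 (ht n) ∧
    (∀ y : ℕ, 1 ≤ y →
      (state (n - 1)).2.1 y = if y ≤ rt n then y - 1 else y + 1) ∧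
    (∀ y : ℕ, 1 ≤ y → (state (n - 1)).2.2 y = tU (ht n) (rt n) y) := by
  rw [invariant n hn]
  refine ⟨rfl, ?_, fun y _ => rfl⟩
  intro y hy
  simp only [P]
  split_ifs <;> omega

end Stmt8
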